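/- Let X be a real random variable with distribution F, 0 < ε < 1/2, q(ε) = 1/(2(1-ε)), and suppose A = F^{-1}(1 - q(ε)) and B = F^{-1}(q(ε)) exist uniquely. Then for any distribution G on ℝ, the median of the contaminated distribution F(ε, G) = (1-ε)F + εG satisfies A ≤ Med(F(ε, G)) ≤ B. -/

import Mathlib

open MeasureTheory ProbabilityTheory
open scoped ENNReal

/-- ε-contamination `F(ε, G) = (1-ε)F + εG`. -/
noncomputable def mix {α : Type*} [MeasurableSpace α] (ε : ℝ) (F G : Measure α) : Measure α :=
  ENNReal.ofReal (1 - ε) • F + ENNReal.ofReal ε • G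

/-- The `p`-th quantile of a measure on `ℝ`. -/
noncomputable def quant (μ : Measure ℝ) (p : ℝ) : ℝ := sInf {x : ℝ | p ≤ cdf μ x}

/-- The median of a measure on `ℝ`. -/
noncomputable def med (μ : Measure ℝ) : ℝ := quant μ (1 / 2)

/-! Whatever `G` is, `F(ε, G)` has cdf between `(1-ε) F` and `(1-ε) F + ε`. At `B` the lower
bound already reaches `1/2`, and strictly left of `A` the upper bound stays below `1/2`
because `A` is the only point where `F` takes the value `1 - q(ε)`; so the median of the
contaminated law is pinned in `[A, B]`. -/

section Mixture

variable {ε : ℝ} {F G : Measure ℝ} [IsProbabilityMeasure F] [IsProbabilityMeasure G]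

theorem isProbabilityMeasure_mix (hε0 : 0 ≤ ε) (hε1 : ε ≤ 1) :
    IsProbabilityMeasure (mix ε F G) := by
  constructor
  simp [mix, ← ENNReal.ofReal_add (sub_nonneg.2 hε1) hε0]

theorem cdf_mix (hε0 : 0 ≤ ε) (hε1 : ε ≤ 1) (x : ℝ) :
    cdf (mix ε F G) x = (1 - ε) * cdf F x + ε * cdf G x := by
  have := isProbabilityMeasure_mix (F := F) (G := G) hε0 hε1
  simp only [cdf_eq_real, measureReal_def]
  simp only [mix, Measure.add_apply, Measure.smul_apply, smul_eq_mul]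
  rw [ENNReal.toReal_add (by finiteness) (by finiteness), ENNReal.toReal_mul,
    ENNReal.toReal_mul, ENNReal.toReal_ofReal (sub_nonneg.2 hε1), ENNReal.toReal_ofReal hε0]

end Mixture

theorem cdf_lt_cdf_of_lt {μ : Measure ℝ} {a x : ℝ}
    (ha : ∀ t, cdf μ t = cdf μ a → t = a) (hx : x < a) : cdf μ x < cdf μ a :=
  (monotone_cdf μ hx.le).lt_of_ne fun h ↦ hx.ne (ha x h)

theorem quant_mem_Icc {μ : Measure ℝ} {p a b : ℝ} (ha : ∀ x < a, cdf μ x < p)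
    (hb : p ≤ cdf μ b) : quant μ p ∈ Set.Icc a b := by
  have lower : a ∈ lowerBounds {x | p ≤ cdf μ x} := fun x hx ↦ not_lt.1 fun hxa ↦
    (ha x hxa).not_ge hx
  exact ⟨le_csInf ⟨b, hb⟩ lower, csInf_le ⟨a, lower⟩ hb⟩

theorem stmt4_general (F G : Measure ℝ) [IsProbabilityMeasure F] [IsProbabilityMeasure G]
    (ε : ℝ) (hε1 : 0 < ε) (hε2 : ε < 1 / 2)
    (A B : ℝ)
    (hA : cdf F A = 1 - 1 / (2 * (1 - ε)))
    (hAu : ∀ t : ℝ, cdf F t = 1 - 1 / (2 * (1 - ε)) → t = A)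
    (hB : cdf F B = 1 / (2 * (1 - ε))) :
    A ≤ med (mix ε F G) ∧ med (mix ε F G) ≤ B := by
  have hq : (1 - ε) * (1 / (2 * (1 - ε))) = 1 / 2 := by
    field_simp [show 1 - ε ≠ 0 by linarith]
  have hcdf := cdf_mix (F := F) (G := G) hε1.le (by linarith)
  refine quant_mem_Icc (fun x hx ↦ ?_) ?_
  · have hFx := cdf_lt_cdf_of_lt (fun t ht ↦ hAu t (ht.trans hA)) hx
    rw [hcdf]
    rw [hA] at hFx
    nlinarith [cdf_le_one G x]
  · rw [hcdf, hB]
    nlinarith [cdf_nonneg G B]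

/-- Lemma 3.1 (L-i): `A ≤ Med(F(ε,G)) ≤ B`. -/
theorem stmt4 (F G : Measure ℝ) [IsProbabilityMeasure F] [IsProbabilityMeasure G]
    (ε : ℝ) (hε1 : 0 < ε) (hε2 : ε < 1 / 2)
    (A B : ℝ)
    (hA : cdf F A = 1 - 1 / (2 * (1 - ε)))
    (hAu : ∀ t : ℝ, cdf F t = 1 - 1 / (2 * (1 - ε)) → t = A)
    (hB : cdf F B = 1 / (2 * (1 - ε)))
    (hBu : ∀ t : ℝ, cdf F t = 1 / (2 * (1 - ε)) → t = B) :
    A ≤ med (mix ε F G) ∧ med (mix ε F G) ≤ B :=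
  stmt4_general F G ε hε1 hε2 A B hA hAu hB
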